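/- For an LTLf formula ψ in xnf form (i.e., all temporal atoms of ψ^p are ○- or ●-formulas) whose propositionalization has been fully evaluated on all variables of P by a letter σ, the formula RmNext(xnf(ψ)^p |_σ), regarded as an LTLf formula, satisfies: for every nonempty finite trace ρ with ρ[0] = σ, ρ,0 ⊨ ψ if and only if the suffix ρ[1..] satisfies RmNext(xnf(ψ)^p |_σ) (where the empty suffix is evaluated by empty-trace semantics). -/

import Mathlib

namespace LTLfSynth

open scoped Classical

/-- LTLf formulas in negation normal form. -/
inductive LTLf (P : Type*) where
  | tt : LTLf P
  | ff : LTLf P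
  | atom : P → LTLf P
  | natom : P → LTLf P
  | and : LTLf P → LTLf P → LTLf P
  | or : LTLf P → LTLf P → LTLf P
  | next : LTLf P → LTLf P
  | wnext : LTLf P → LTLf P
  | until_ : LTLf P → LTLf P → LTLf P
  | release : LTLf P → LTLf P → LTLf P

variable {P : Type*}

/-- ◇true -/
def diamondTrue : LTLf P := .until_ .tt .tt

/-- □false -/
def boxFalse : LTLf P := .release .ff .ff

/-- Finite-trace satisfaction `ρ, i ⊨ φ`, where position `ρ.length` (and beyond)
corresponds to the empty suffix (empty-trace semantics). -/
def Sat (ρ : List (Set P)) : LTLf P → ℕ → Prop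
  | .tt, _ => True
  | .ff, _ => False
  | .atom p, i => i < ρ.length ∧ p ∈ ρ.getD i ∅
  | .natom p, i => i < ρ.length ∧ p ∉ ρ.getD i ∅
  | .and φ ψ, i => Sat ρ φ i ∧ Sat ρ ψ i
  | .or φ ψ, i => Sat ρ φ i ∨ Sat ρ ψ i
  | .next φ, i => i + 1 < ρ.length ∧ Sat ρ φ (i + 1)
  | .wnext φ, i => i + 1 < ρ.length → Sat ρ φ (i + 1)
  | .until_ φ ψ, i =>
      ∃ j, i ≤ j ∧ j < ρ.length ∧ Sat ρ ψ j ∧ ∀ k, i ≤ k → k < j → Sat ρ φ k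
  | .release φ ψ, i =>
      ∀ j, i ≤ j → j < ρ.length → (Sat ρ ψ j ∨ ∃ k, i ≤ k ∧ k < j ∧ Sat ρ φ k)

/-- The next-normal-form transformation. -/
def xnf : LTLf P → LTLf P
  | .and φ ψ => .and (xnf φ) (xnf ψ)
  | .or φ ψ => .or (xnf φ) (xnf ψ)
  | .until_ .tt .tt => .until_ .tt .tt
  | .until_ φ ψ => .or (.and (xnf ψ) diamondTrue) (.and (xnf φ) (.next (.until_ φ ψ)))
  | .release .ff .ff => .release .ff .ff
  | .release φ ψ => .and (.or (xnf ψ) boxFalse) (.or (xnf φ) (.wnext (.release φ ψ)))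
  | φ => φ

/-- Substitute the letter `σ` for the propositional literals of a (propositionalized)
formula, leaving temporal subformulas untouched: `φ^p |_σ`. -/
noncomputable def substLit (σ : Set P) : LTLf P → LTLf P
  | .atom p => if p ∈ σ then .tt else .ff
  | .natom p => if p ∈ σ then .ff else .tt
  | .and φ ψ => .and (substLit σ φ) (substLit σ ψ)
  | .or φ ψ => .or (substLit σ φ) (substLit σ ψ)
  | φ => φ

/-- The `RmNext` function on (propositionalized) formulas in xnf form. -/
def rmNext : LTLf P → LTLf P
  | .until_ .tt .tt => .tt
  | .release .ff .ff => .ff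
  | .and φ ψ => .and (rmNext φ) (rmNext ψ)
  | .or φ ψ => .or (rmNext φ) (rmNext ψ)
  | .next φ => .and φ diamondTrue
  | .wnext φ => .or φ boxFalse
  | φ => φ

/-! The unfolding `xnf` only applies the one-step expansion laws
`φ U ψ ≡ (ψ ∧ ◇true) ∨ (φ ∧ ○(φ U ψ))` and `φ R ψ ≡ (ψ ∨ □false) ∧ (φ ∨ ●(φ R ψ))`, so it preserves
satisfaction. At a position inside the trace, the literals may be replaced by their truth values
under the current letter. What is left is a Boolean combination of `○`-, `●`-formulas, `◇true` and
`□false`, and `RmNext` turns each of these into a formula that holds one position later exactly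
when the original holds now; on a trace `σ :: ρ`, one position later is position `0` of `ρ`. -/

theorem exists_ge_succ_iff {p : ℕ → Prop} {i : ℕ} :
    (∃ j, i + 1 ≤ j ∧ p j) ↔ ∃ j, i ≤ j ∧ p (j + 1) :=
  ⟨fun ⟨j, hj, h⟩ => ⟨j - 1, by omega, by rwa [Nat.sub_add_cancel (by omega)]⟩,
    fun ⟨j, hj, h⟩ => ⟨j + 1, by omega, h⟩⟩

theorem forall_ge_succ_iff {p : ℕ → Prop} {i : ℕ} :
    (∀ j, i + 1 ≤ j → p j) ↔ ∀ j, i ≤ j → p (j + 1) :=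
  ⟨fun h j hj => h (j + 1) (by omega),
    fun h j hj => by simpa [Nat.sub_add_cancel (by omega : 1 ≤ j)] using h (j - 1) (by omega)⟩

theorem sat_cons_succ (a : Set P) (ρ : List (Set P)) (φ : LTLf P) (i : ℕ) :
    Sat (a :: ρ) φ (i + 1) ↔ Sat ρ φ i := by
  induction φ generalizing i <;>
    simp only [Sat, List.length_cons, List.getD_cons_succ, exists_ge_succ_iff,
      forall_ge_succ_iff, Nat.add_lt_add_iff_right, *]

theorem sat_diamondTrue (ρ : List (Set P)) (i : ℕ) : Sat ρ diamondTrue i ↔ i < ρ.length :=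
  ⟨fun ⟨j, hij, hj, _⟩ => by omega, fun hi => ⟨i, le_rfl, hi, trivial, fun _ _ _ => trivial⟩⟩

theorem sat_boxFalse (ρ : List (Set P)) (i : ℕ) : Sat ρ boxFalse i ↔ ρ.length ≤ i := by
  refine ⟨fun H => ?_, fun hi j hij hj => absurd hj (by omega)⟩
  by_contra! hi
  obtain h | ⟨_, _, _, h⟩ := H i le_rfl hi <;> exact h

theorem sat_until_iff (ρ : List (Set P)) (φ ψ : LTLf P) (i : ℕ) :
    Sat ρ (.until_ φ ψ) i ↔
      (Sat ρ ψ i ∧ i < ρ.length) ∨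
        (Sat ρ φ i ∧ i + 1 < ρ.length ∧ Sat ρ (.until_ φ ψ) (i + 1)) := by
  constructor
  · rintro ⟨j, hij, hj, hψ, hφ⟩
    obtain rfl | hlt := hij.eq_or_lt
    · exact .inl ⟨hψ, hj⟩
    · exact .inr ⟨hφ i le_rfl hlt, by omega, j, hlt, hj, hψ, fun k hk => hφ k (by omega)⟩
  · rintro (⟨hψ, hi⟩ | ⟨hφ, -, j, hij, hj, hψ, hφ'⟩)
    · exact ⟨i, le_rfl, hi, hψ, fun k hk hki => absurd hki (by omega)⟩
    · refine ⟨j, by omega, hj, hψ, fun k hk hkj => ?_⟩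
      obtain rfl | hlt := hk.eq_or_lt
      exacts [hφ, hφ' k hlt hkj]

theorem sat_release_iff (ρ : List (Set P)) (φ ψ : LTLf P) (i : ℕ) :
    Sat ρ (.release φ ψ) i ↔
      (Sat ρ ψ i ∨ ρ.length ≤ i) ∧
        (Sat ρ φ i ∨ (i + 1 < ρ.length → Sat ρ (.release φ ψ) (i + 1))) := by
  constructor
  · intro H
    refine ⟨?_, or_iff_not_imp_left.2 fun hφ _ j hij hj => ?_⟩
    · by_cases hi : i < ρ.length
      · obtain h | ⟨k, hik, hki, -⟩ := H i le_rfl hi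
        exacts [.inl h, absurd hki (by omega)]
      · exact .inr (by omega)
    · obtain h | ⟨k, hik, hkj, hk⟩ := H j (by omega) hj
      · exact .inl h
      · exact .inr ⟨k, Nat.lt_of_le_of_ne hik fun e => hφ (e ▸ hk), hkj, hk⟩
  · rintro ⟨hψ, hφ⟩ j hij hj
    obtain rfl | hlt := hij.eq_or_lt
    · exact .inl (hψ.resolve_right (by omega))
    · obtain hφ | hR := hφ
      · exact .inr ⟨i, le_rfl, hlt, hφ⟩
      · obtain h | ⟨k, hk, hkj, h⟩ := hR (by omega) j hlt hj
        exacts [.inl h, .inr ⟨k, by omega, hkj, h⟩]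

theorem xnf_until {φ ψ : LTLf P} (h : ¬(φ = .tt ∧ ψ = .tt)) :
    xnf (.until_ φ ψ) = .or (.and (xnf ψ) diamondTrue) (.and (xnf φ) (.next (.until_ φ ψ))) := by
  cases φ <;> cases ψ <;> simp_all [xnf]

theorem xnf_release {φ ψ : LTLf P} (h : ¬(φ = .ff ∧ ψ = .ff)) :
    xnf (.release φ ψ) = .and (.or (xnf ψ) boxFalse) (.or (xnf φ) (.wnext (.release φ ψ))) := by
  cases φ <;> cases ψ <;> simp_all [xnf]

theorem sat_xnf (ρ : List (Set P)) (φ : LTLf P) (i : ℕ) : Sat ρ (xnf φ) i ↔ Sat ρ φ i := by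
  induction φ generalizing i with
  | and φ ψ ihφ ihψ | or φ ψ ihφ ihψ => simp only [xnf, Sat, ihφ, ihψ]
  | until_ φ ψ ihφ ihψ =>
    by_cases h : φ = .tt ∧ ψ = .tt
    · obtain ⟨rfl, rfl⟩ := h
      rfl
    · rw [xnf_until h, sat_until_iff]
      simp only [Sat, sat_diamondTrue, ihφ, ihψ]
  | release φ ψ ihφ ihψ =>
    by_cases h : φ = .ff ∧ ψ = .ff
    · obtain ⟨rfl, rfl⟩ := h
      rfl
    · rw [xnf_release h, sat_release_iff]
      simp only [Sat, sat_boxFalse, ihφ, ihψ]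
  | _ => rfl

theorem sat_substLit {ρ : List (Set P)} {σ : Set P} {i : ℕ} (hi : i < ρ.length)
    (hσ : ρ.getD i ∅ = σ) (φ : LTLf P) : Sat ρ (substLit σ φ) i ↔ Sat ρ φ i := by
  induction φ with
  | atom p | natom p =>
    simp only [substLit]
    split_ifs <;> simp only [Sat, true_and, not_true_eq_false, not_false_eq_true, *]
  | and φ ψ ihφ ihψ | or φ ψ ihφ ihψ => simp only [substLit, Sat, ihφ, ihψ]
  | _ => rfl

inductive IsEvaluatedXnf : LTLf P → Prop
  | tt : IsEvaluatedXnf .tt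
  | ff : IsEvaluatedXnf .ff
  | and {φ ψ} : IsEvaluatedXnf φ → IsEvaluatedXnf ψ → IsEvaluatedXnf (.and φ ψ)
  | or {φ ψ} : IsEvaluatedXnf φ → IsEvaluatedXnf ψ → IsEvaluatedXnf (.or φ ψ)
  | next (φ) : IsEvaluatedXnf (.next φ)
  | wnext (φ) : IsEvaluatedXnf (.wnext φ)
  | diamondTrue : IsEvaluatedXnf diamondTrue
  | boxFalse : IsEvaluatedXnf boxFalse

theorem isEvaluatedXnf_substLit_xnf (σ : Set P) (ψ : LTLf P) :
    IsEvaluatedXnf (substLit σ (xnf ψ)) := by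
  induction ψ with
  | tt => exact .tt
  | ff => exact .ff
  | atom p | natom p =>
    show IsEvaluatedXnf (ite _ _ _)
    split <;> constructor
  | and φ ψ ihφ ihψ => exact .and ihφ ihψ
  | or φ ψ ihφ ihψ => exact .or ihφ ihψ
  | next φ => exact .next φ
  | wnext φ => exact .wnext φ
  | until_ φ ψ ihφ ihψ =>
    by_cases h : φ = .tt ∧ ψ = .tt
    · obtain ⟨rfl, rfl⟩ := h
      exact .diamondTrue
    · rw [xnf_until h]
      exact .or (.and ihψ .diamondTrue) (.and ihφ (.next _))
  | release φ ψ ihφ ihψ =>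
    by_cases h : φ = .ff ∧ ψ = .ff
    · obtain ⟨rfl, rfl⟩ := h
      exact .boxFalse
    · rw [xnf_release h]
      exact .and (.or ihψ .boxFalse) (.or ihφ (.wnext _))

theorem sat_rmNext {ρ : List (Set P)} {φ : LTLf P} {i : ℕ} (hi : i < ρ.length)
    (hφ : IsEvaluatedXnf φ) : Sat ρ (rmNext φ) (i + 1) ↔ Sat ρ φ i := by
  induction hφ with
  | tt | ff => rfl
  | and _ _ ihφ ihψ | or _ _ ihφ ihψ => simp only [rmNext, Sat, ihφ, ihψ]
  | next φ => simp only [rmNext, Sat, sat_diamondTrue, and_comm]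
  | wnext φ => simp only [rmNext, Sat, sat_boxFalse, imp_iff_not_or, not_lt, or_comm]
  | diamondTrue => exact iff_of_true trivial ((sat_diamondTrue ρ i).2 hi)
  | boxFalse => exact iff_of_false id (by rw [sat_boxFalse]; omega)

/-- for a nonempty trace `ρ` starting with letter `σ`, `ρ, 0 ⊨ ψ` iff the
suffix `ρ[1..]` satisfies `RmNext(xnf(ψ)^p |_σ)` (empty-suffix semantics at the end). -/
theorem rmNext_step_correct (ψ : LTLf P) (σ : Set P) (ρ : List (Set P))
    (h : ρ.head? = some σ) :
    Sat ρ ψ 0 ↔ Sat ρ.tail (rmNext (substLit σ (xnf ψ))) 0 := by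
  obtain ⟨ρ, rfl⟩ := List.head?_eq_some_iff.mp h
  rw [List.tail_cons, ← sat_cons_succ σ ρ _ 0, sat_rmNext (by simp) (isEvaluatedXnf_substLit_xnf σ ψ),
    sat_substLit (σ := σ) (by simp) rfl, sat_xnf]

end LTLfSynth
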